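/- Let p ≥ 4 and q ≥ 4, let (j₁, j₂, i₁, i₂) be a connected abstract square bridge diagram of size (p, q) with intersection count κ = Σ_{i : Fin p} (j₂ i − j₁ i + 1), and let b_F, b_{pq} be integers with b_F ≥ 1, b_{pq} ≥ 1, and b_{pq} dividing gcd(p, q). Define rational numbers g_F = (2 − b_F − (p + q − κ))/2 and g_{pq} = (2 − b_{pq} − (p + q − p·q))/2. Then g_F < g_{pq}. -/

import Mathlib

/-- An abstract square bridge diagram of size `(p, q)`: the `i`-th horizontal
segment has its two endpoints (corners) on the `j₁ i`-th and `j₂ i`-th vertical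
segments, and the `j`-th vertical segment has its endpoints on the `i₁ j`-th and
`i₂ j`-th horizontal segments. -/
structure SquareBridgeDiagram (p q : ℕ) where
  j₁ : Fin p → Fin q
  j₂ : Fin p → Fin q
  i₁ : Fin q → Fin p
  i₂ : Fin q → Fin p
  j₁_lt_j₂ : ∀ i, j₁ i < j₂ i
  i₁_lt_i₂ : ∀ j, i₁ j < i₂ j
  corner : ∀ i j, (j = j₁ i ∨ j = j₂ i) ↔ (i = i₁ j ∨ i = i₂ j)

/-- The intersection count `κ = Σ_i (j₂ i − j₁ i + 1)`: the number of pairs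
`(i, j)` with `j₁ i ≤ j ≤ j₂ i`, i.e. how many of the `q` vertical lines meet
the `i`-th horizontal segment. -/
def SquareBridgeDiagram.kappa {p q : ℕ} (D : SquareBridgeDiagram p q) : ℕ :=
  ∑ i : Fin p, ((D.j₂ i : ℕ) - (D.j₁ i : ℕ) + 1)

/-- The bipartite incidence graph of a square bridge diagram: the horizontal
segment `i` is adjacent to the vertical segment `j` exactly when the two
segments intersect, i.e. `j₁ i ≤ j ≤ j₂ i` and `i₁ j ≤ i ≤ i₂ j`. -/
def SquareBridgeDiagram.graph {p q : ℕ} (D : SquareBridgeDiagram p q) :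
    SimpleGraph (Fin p ⊕ Fin q) where
  Adj x y :=
    match x, y with
    | Sum.inl i, Sum.inr j =>
        (D.j₁ i ≤ j ∧ j ≤ D.j₂ i) ∧ (D.i₁ j ≤ i ∧ i ≤ D.i₂ j)
    | Sum.inr j, Sum.inl i =>
        (D.j₁ i ≤ j ∧ j ≤ D.j₂ i) ∧ (D.i₁ j ≤ i ∧ i ≤ D.i₂ j)
    | _, _ => False
  symm := by
    constructor
    intro x y h
    cases x <;> cases y <;> simp_all
  loopless := by
    constructor
    intro x h
    cases x <;> simp_all

/-- A square bridge diagram is connected if its bipartite incidence graph is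
connected (the corresponding link is not split). -/
def SquareBridgeDiagram.Connected {p q : ℕ} (D : SquareBridgeDiagram p q) :
    Prop :=
  D.graph.Connected

/-!
Each vertical segment carries exactly two corners, so at most two horizontal segments start
(resp. end) on any given vertical line. Hence at most `2 (t + 1)` horizontal segments start at
or left of column `t`, and at most `2 (q - 1 - t)` end right of it, so at most the minimum of
these crosses the gap between columns `t` and `t + 1`. Summing over the gaps bounds the total
length `∑ (j₂ i - j₁ i)` by `q² / 2`. Counting corners both ways also forces `p = q`, so
`κ = ∑ (j₂ i - j₁ i) + q ≤ q² - q` once `q ≥ 4`. Since `b_{pq} ≤ gcd(q, q) = q` and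
`b_F ≥ 1`, this gives `2 g_F = κ - 2q + 2 - b_F < q² - 2q + 2 - b_{pq} = 2 g_{pq}`.
-/

open Finset

theorem four_mul_sum_range_min_le (n : ℕ) :
    4 * ∑ t ∈ range n, min (t + 1) (n - 1 - t) ≤ n * n := by
  induction n using Nat.twoStepInduction with
  | zero => simp
  | one => simp
  | more n ih _ =>
    have step : ∑ t ∈ range (n + 2), min (t + 1) (n + 2 - 1 - t)
        = ∑ t ∈ range n, min (t + 1) (n - 1 - t) + (n + 1) := by
      rw [sum_range_succ, sum_range_succ']
      have shift : ∀ s ∈ range n, min (s + 1 + 1) (n + 2 - 1 - (s + 1))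
          = min (s + 1) (n - 1 - s) + 1 := fun s hs => by
        have := mem_range.mp hs; omega
      rw [sum_congr rfl shift, sum_add_distrib]
      simp only [sum_const, card_range, smul_eq_mul, mul_one]
      omega
    rw [step]
    nlinarith

theorem card_filter_mem_le_mul {ι κ : Type*} [Fintype ι] [DecidableEq κ] (f : ι → κ)
    (s : Finset κ) {n : ℕ} (hf : ∀ k, #{i | f i = k} ≤ n) : #{i | f i ∈ s} ≤ n * #s :=
  card_le_mul_card_image_of_maps_to (fun i hi => (mem_filter.1 hi).2) n fun k _ =>
    (card_le_card fun i hi => by simp_all).trans (hf k)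

namespace SquareBridgeDiagram

variable {p q : ℕ}

theorem size_eq (D : SquareBridgeDiagram p q) : p = q := by
  have pair_card {n : ℕ} (a b : Fin n) (h : a < b) :
      #{x | x = a ∨ x = b} = 2 := by
    rw [show ({x | x = a ∨ x = b} : Finset (Fin n)) = {a, b} by ext; simp, card_pair h.ne]
  have h := card_mul_eq_card_mul (s := univ) (t := univ) (m := 2) (n := 2)
    (fun i j => j = D.j₁ i ∨ j = D.j₂ i)
    (fun i _ => pair_card _ _ (D.j₁_lt_j₂ i))
    (fun j _ => by
      simp only [bipartiteBelow, D.corner]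
      exact pair_card _ _ (D.i₁_lt_i₂ j))
  simpa using h

variable (D : SquareBridgeDiagram p q)

theorem card_j₁_eq_le (j : Fin q) : #{i | D.j₁ i = j} ≤ 2 :=
  (card_le_card fun i hi => by
    simpa using (D.corner i j).1 (Or.inl (mem_filter.1 hi).2.symm)).trans card_le_two

theorem card_j₂_eq_le (j : Fin q) : #{i | D.j₂ i = j} ≤ 2 :=
  (card_le_card fun i hi => by
    simpa using (D.corner i j).1 (Or.inr (mem_filter.1 hi).2.symm)).trans card_le_two

theorem card_j₁_le_le (t : Fin q) : #{i | D.j₁ i ≤ t} ≤ 2 * (t + 1) := by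
  simpa [Fin.card_Iic] using card_filter_mem_le_mul D.j₁ (Iic t) D.card_j₁_eq_le

theorem card_lt_j₂_le (t : Fin q) : #{i | t < D.j₂ i} ≤ 2 * (q - 1 - t) := by
  simpa [Fin.card_Ioi] using card_filter_mem_le_mul D.j₂ (Ioi t) D.card_j₂_eq_le

theorem card_crossing_le (t : Fin q) :
    #{i | D.j₁ i ≤ t ∧ t < D.j₂ i} ≤ 2 * min ((t : ℕ) + 1) (q - 1 - t) := by
  rw [← Nat.mul_min_mul_left]
  exact le_min
    ((card_le_card (monotone_filter_right _ fun _ _ h => h.1)).trans (D.card_j₁_le_le t))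
    ((card_le_card (monotone_filter_right _ fun _ _ h => h.2)).trans (D.card_lt_j₂_le t))

theorem sum_length_eq :
    ∑ i, ((D.j₂ i : ℕ) - D.j₁ i) = ∑ t, #{i | D.j₁ i ≤ t ∧ t < D.j₂ i} := by
  have length_eq (i : Fin p) : (D.j₂ i : ℕ) - D.j₁ i = #{t | D.j₁ i ≤ t ∧ t < D.j₂ i} := by
    rw [← Fin.card_Ico]
    congr 1
    ext
    simp
  simp_rw [length_eq]
  exact sum_card_bipartiteAbove_eq_sum_card_bipartiteBelow _

theorem two_mul_sum_length_le : 2 * ∑ i, ((D.j₂ i : ℕ) - D.j₁ i) ≤ q * q :=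
  calc 2 * ∑ i, ((D.j₂ i : ℕ) - D.j₁ i)
      = 2 * ∑ t, #{i | D.j₁ i ≤ t ∧ t < D.j₂ i} := by rw [sum_length_eq]
    _ ≤ 2 * ∑ t : Fin q, 2 * min ((t : ℕ) + 1) (q - 1 - t) := by
      gcongr with t
      exact D.card_crossing_le t
    _ = 4 * ∑ t ∈ range q, min (t + 1) (q - 1 - t) := by
      rw [← mul_sum, Fin.sum_univ_eq_sum_range (fun t => min (t + 1) (q - 1 - t))]
      ring
    _ ≤ q * q := four_mul_sum_range_min_le q

theorem kappa_eq : D.kappa = ∑ i, ((D.j₂ i : ℕ) - D.j₁ i) + p := by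
  simp [kappa, sum_add_distrib]

theorem kappa_add_le (hq : 4 ≤ q) : D.kappa + q ≤ q * q := by
  have hlength := D.two_mul_sum_length_le
  have hsize := D.size_eq
  have hsq : 4 * q ≤ q * q := Nat.mul_le_mul_right q hq
  rw [kappa_eq]
  omega

end SquareBridgeDiagram

theorem genus_of_page_lt_genus_of_torus_page_general
    (p q : ℕ) (hq : 4 ≤ q)
    (D : SquareBridgeDiagram p q)
    (bF bpq : ℤ) (hbF : 1 ≤ bF)
    (hdvd : bpq ∣ (Nat.gcd p q : ℤ))
    (gF gpq : ℚ)
    (hgF : gF = (2 - (bF : ℚ) - ((p : ℚ) + q - D.kappa)) / 2)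
    (hgpq : gpq = (2 - (bpq : ℚ) - ((p : ℚ) + q - p * q)) / 2) :
    gF < gpq := by
  obtain rfl := D.size_eq
  have hkappa : (D.kappa : ℚ) + p ≤ p * p := by exact_mod_cast D.kappa_add_le hq
  have hbpq : (bpq : ℚ) ≤ p := by
    rw [Nat.gcd_self] at hdvd
    exact_mod_cast Int.le_of_dvd (by omega) hdvd
  have one_le_bF : (1 : ℚ) ≤ bF := by exact_mod_cast hbF
  rw [hgF, hgpq]
  linarith

/-- The combinatorial form of part (4) of the main theorem: for a non-split
link given by a connected square bridge diagram with `p > 3` and `q > 3`, the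
genus `g_F = (2 − b_F − (p + q − κ))/2` of the page `F` produced by the
algorithm (built from `p + q` disks and `κ` bands, with `b_F = |∂F| ≥ 1`
boundary components) is strictly smaller than the genus
`g_{pq} = (2 − b_{pq} − (p + q − pq))/2` of the torus-link Seifert surface
`F_{p,q}` (built from `p + q` disks and `pq` bands, where
`b_{pq} = |∂F_{p,q}|` divides `gcd(p, q)`). -/
theorem genus_of_page_lt_genus_of_torus_page
    (p q : ℕ) (hp : 4 ≤ p) (hq : 4 ≤ q)
    (D : SquareBridgeDiagram p q) (hD : D.Connected)
    (bF bpq : ℤ) (hbF : 1 ≤ bF) (hbpq : 1 ≤ bpq)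
    (hdvd : bpq ∣ (Nat.gcd p q : ℤ))
    (gF gpq : ℚ)
    (hgF : gF = (2 - (bF : ℚ) - ((p : ℚ) + q - D.kappa)) / 2)
    (hgpq : gpq = (2 - (bpq : ℚ) - ((p : ℚ) + q - p * q)) / 2) :
    gF < gpq :=
  genus_of_page_lt_genus_of_torus_page_general p q hq D bF bpq hbF hdvd gF gpq hgF hgpq
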